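/- Let x ∈ E_d, r ∈ ℝ₊^d, and let s be the smallest solution of the system (r, x). Then for every i ∈ [d]_s (i.e. every i with s_i < ∞), s_i = inf{ t ≥ 0 : x^{i,i}(t−) = inf_{0 ≤ u ≤ s_i} x^{i,i}(u) }. -/

import Mathlib

open Filter Topology Set
open scoped ENNReal

noncomputable section

/-- The value of `f` "at `t⁻`" for an extended time `t ∈ [0,∞]`, as an extended real number:
at `t = 0` it is `f 0` (convention `f(0-) = f(0)`), at `t = ∞` it is the limit (limsup) of `f`
at infinity, and at a finite `t > 0` it is the left limit of `f` at `t`. -/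
def preLimE (f : ℝ → ℝ) (t : ℝ≥0∞) : EReal :=
  if t = 0 then (f 0 : EReal)
  else if t = ⊤ then Filter.limsup (fun s : ℝ => (f s : EReal)) Filter.atTop
  else ((Function.leftLim f t.toReal : ℝ) : EReal)

/-- The family `x = (x^{i,j})_{i,j ∈ [d]}` of real functions on `ℝ₊` belongs to the class
`E_d`: each `x i j` is càdlàg on `ℝ₊` with `x i j 0 = 0`, each diagonal entry `x i i` is
downward skip free (no negative jumps), and each off-diagonal entry is nondecreasing. -/
structure MemE (d : ℕ) (x : Fin d → Fin d → ℝ → ℝ) : Prop where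
  zero : ∀ i j, x i j 0 = 0
  rightCont : ∀ i j, ∀ t : ℝ, 0 ≤ t → ContinuousWithinAt (x i j) (Set.Ici t) t
  leftLimEx : ∀ i j, ∀ t : ℝ, 0 < t →
    ∃ l : ℝ, Filter.Tendsto (x i j) (nhdsWithin t (Set.Iio t)) (nhds l)
  skipFree : ∀ i, ∀ t : ℝ, 0 < t → Function.leftLim (x i i) t ≤ x i i t
  mono : ∀ i j, i ≠ j → MonotoneOn (x i j) (Set.Ici 0)

/-- `s ∈ [0,∞]^d` is a solution of the system `(r, x)`:
`r i + ∑_j x^{i,j}(s_j−) = 0` for every coordinate `i` with `s i < ∞`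
(the equality being required in the extended reals, hence implicitly the sum is finite). -/
def IsSolution (d : ℕ) (x : Fin d → Fin d → ℝ → ℝ) (r : Fin d → ℝ)
    (s : Fin d → ℝ≥0∞) : Prop :=
  ∀ i, s i ≠ ⊤ → (r i : EReal) + ∑ j, preLimE (x i j) (s j) = 0


/-- `s` is the smallest solution of the system `(r, x)`: it is a solution and every
solution `t` satisfies `s ≤ t` coordinatewise. -/
def IsSmallestSolution (d : ℕ) (x : Fin d → Fin d → ℝ → ℝ) (r : Fin d → ℝ)
    (s : Fin d → ℝ≥0∞) : Prop :=
  IsSolution d x r s ∧ ∀ t : Fin d → ℝ≥0∞, IsSolution d x r t → s ≤ t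

/-- The left limit of `f` at a nonnegative real time `t`, with the convention
`f(0−) = f(0)`. -/
def leftLimR (f : ℝ → ℝ) (t : ℝ) : ℝ :=
  if t ≤ 0 then f 0 else Function.leftLim f t

/-!
Let `Φ` send `u ∈ [0,∞]^d` to the vector whose `k`-th entry is the first time `t` at which
`x^{k,k}(t−)` drops to the level `-(r_k + ∑_{j ≠ k} x^{k,j}(u_j−))`. Since the off-diagonal
entries are nondecreasing, `Φ` is monotone; every solution `u` satisfies `Φ u ≤ u`, and every
fixed point of `Φ` is a solution, because a downward skip free càdlàg function starting at `0`
cannot jump over a level `≤ 0`. Hence the smallest solution is the least fixed point of `Φ`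
(Knaster–Tarski), so `s_i` is the first passage time `T` of `x^{i,i}(·−)` at some level `c`.
Before `T`, `x^{i,i} ≥ x^{i,i}(·−) > c`, while `x^{i,i}(T−) = c`: so the infimum of `x^{i,i}`
over `[0, T]` is `c`, and `T` is the first time the left limit takes this value.
-/

open scoped ENNReal NNReal

structure CadlagSkipFree (g : ℝ → ℝ) : Prop where
  rightCont : ∀ t, 0 ≤ t → ContinuousWithinAt g (Ici t) t
  leftLimEx : ∀ t, 0 < t → ∃ l, Tendsto g (𝓝[<] t) (𝓝 l)
  leftLim_le : ∀ t, 0 < t → Function.leftLim g t ≤ g t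

section LeftLimit

variable {g : ℝ → ℝ} {c t T : ℝ}

lemma leftLimR_zero : leftLimR g 0 = g 0 := if_pos le_rfl

lemma leftLimR_of_pos (ht : 0 < t) : leftLimR g t = Function.leftLim g t := if_neg ht.not_ge

lemma tendsto_leftLimR (hll : ∀ t, 0 < t → ∃ l, Tendsto g (𝓝[<] t) (𝓝 l)) (ht : 0 < t) :
    Tendsto g (𝓝[<] t) (𝓝 (leftLimR g t)) := by
  obtain ⟨l, hl⟩ := hll t ht
  rwa [leftLimR_of_pos ht, leftLim_eq_of_tendsto hl]

lemma CadlagSkipFree.leftLimR_le (hg : CadlagSkipFree g) (ht : 0 ≤ t) : leftLimR g t ≤ g t := by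
  rcases ht.eq_or_lt with rfl | ht
  · exact leftLimR_zero.le
  · exact (leftLimR_of_pos ht).trans_le (hg.leftLim_le t ht)

lemma CadlagSkipFree.tendsto_leftLimR_nhdsGT (hg : CadlagSkipFree g) (ht : 0 ≤ t) :
    Tendsto (leftLimR g) (𝓝[>] t) (𝓝 (g t)) := by
  refine Metric.nhds_basis_closedBall.tendsto_right_iff.2 fun ε hε => ?_
  have hnear : ∀ᶠ v in 𝓝[>] t, g v ∈ Metric.closedBall (g t) ε :=
    ((hg.rightCont t ht).mono Ioi_subset_Ici_self).eventually (Metric.closedBall_mem_nhds _ hε)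
  obtain ⟨b, hb, hsub⟩ := mem_nhdsGT_iff_exists_Ioo_subset.1 hnear
  filter_upwards [Ioo_mem_nhdsGT hb] with w hw
  refine Metric.isClosed_closedBall.mem_of_tendsto
    (tendsto_leftLimR hg.leftLimEx (ht.trans_lt hw.1)) ?_
  filter_upwards [Ioo_mem_nhdsLT hw.1] with v hv
  exact hsub ⟨hv.1, hv.2.trans hw.2⟩

lemma lt_leftLimR_of_isGLB (hT : IsGLB {t | 0 ≤ t ∧ leftLimR g t ≤ c} T) {v : ℝ}
    (hv : 0 ≤ v) (hvT : v < T) : c < leftLimR g v :=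
  not_le.1 fun hle => (hT.1 ⟨hv, hle⟩).not_gt hvT

lemma CadlagSkipFree.leftLimR_eq_of_isGLB (hg : CadlagSkipFree g) (hc : c ≤ g 0)
    (hT : IsGLB {t | 0 ≤ t ∧ leftLimR g t ≤ c} T) : leftLimR g T = c := by
  have hT0 : 0 ≤ T := hT.2 fun _ ht => ht.1
  refine le_antisymm ?_ ?_
  -- The infimum is attained, or approached from the right where `g(w−) → g T`.
  · have hfreq := hT.frequently_mem hT.nonempty
    rw [← Ioi_insert, nhdsWithin_insert, frequently_sup, frequently_pure] at hfreq
    rcases hfreq with hattained | hright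
    · exact hattained.2
    · have hgT : g T ∈ Iic c :=
        ((hg.tendsto_leftLimR_nhdsGT hT0).frequently
          (hright.mono fun _ hw => hw.2)).mem_of_closed isClosed_Iic
      exact (hg.leftLimR_le hT0).trans hgT
  · rcases hT0.eq_or_lt with rfl | hTpos
    · rwa [leftLimR_zero]
    · refine ge_of_tendsto (tendsto_leftLimR hg.leftLimEx hTpos) ?_
      filter_upwards [Ioo_mem_nhdsLT hTpos] with v hv
      exact (lt_leftLimR_of_isGLB hT hv.1.le hv.2).le.trans (hg.leftLimR_le hv.1.le)

theorem CadlagSkipFree.eq_sInf_leftLimR_eq_sInf_image (hg : CadlagSkipFree g) (hc : c ≤ g 0)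
    (hT : IsGLB {t | 0 ≤ t ∧ leftLimR g t ≤ c} T) :
    T = sInf {t | 0 ≤ t ∧ leftLimR g t = sInf (g '' Icc 0 T)} := by
  have hT0 : 0 ≤ T := hT.2 fun _ ht => ht.1
  have hTc : leftLimR g T = c := hg.leftLimR_eq_of_isGLB hc hT
  have hlow : ∀ u ∈ Icc 0 T, c ≤ g u := by
    rintro u ⟨hu0, huT⟩
    rcases huT.lt_or_eq with hu | rfl
    · exact (lt_leftLimR_of_isGLB hT hu0 hu).le.trans (hg.leftLimR_le hu0)
    · exact hTc ▸ hg.leftLimR_le hu0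
  have hbdd : BddBelow (g '' Icc 0 T) := ⟨c, forall_mem_image.2 hlow⟩
  have hinf : sInf (g '' Icc 0 T) = c := by
    refine le_antisymm ?_ (le_csInf ((nonempty_Icc.2 hT0).image g) (forall_mem_image.2 hlow))
    rcases hT0.eq_or_lt with rfl | hTpos
    · rw [← hTc, leftLimR_zero]
      exact csInf_le hbdd (mem_image_of_mem g (left_mem_Icc.2 le_rfl))
    · rw [← hTc]
      refine ge_of_tendsto (tendsto_leftLimR hg.leftLimEx hTpos) ?_
      filter_upwards [Ioo_mem_nhdsLT hTpos] with v hv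
      exact csInf_le hbdd (mem_image_of_mem g (Ioo_subset_Icc_self hv))
  have hleast : IsLeast {t | 0 ≤ t ∧ leftLimR g t = c} T :=
    ⟨⟨hT0, hTc⟩, fun t ht => not_lt.1 fun htT =>
      (lt_leftLimR_of_isGLB hT ht.1 htT).ne' ht.2⟩
  rw [hinf, hleast.csInf_eq]

end LeftLimit

def firstPassage (g : ℝ → ℝ) (c : EReal) : ℝ≥0∞ :=
  sInf {t : ℝ≥0∞ | t ≠ ⊤ ∧ (leftLimR g t.toReal : EReal) ≤ c}

lemma antitone_firstPassage (g : ℝ → ℝ) : Antitone (firstPassage g) :=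
  fun _ _ hcc' => sInf_le_sInf fun _ ht => ⟨ht.1, ht.2.trans hcc'⟩

lemma firstPassage_bot (g : ℝ → ℝ) : firstPassage g ⊥ = ⊤ := by
  simp [firstPassage]

lemma firstPassage_le {g : ℝ → ℝ} {c : EReal} {t : ℝ≥0∞} (ht : t ≠ ⊤)
    (hle : (leftLimR g t.toReal : EReal) ≤ c) : firstPassage g c ≤ t :=
  sInf_le ⟨ht, hle⟩

lemma isGLB_firstPassage {g : ℝ → ℝ} {c : ℝ} (h : firstPassage g c ≠ ⊤) :
    IsGLB {t | 0 ≤ t ∧ leftLimR g t ≤ c} (firstPassage g c).toReal := by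
  refine ⟨fun t ht => ?_, fun b hb => ?_⟩
  · refine ENNReal.toReal_le_of_le_ofReal ht.1 (firstPassage_le ENNReal.ofReal_ne_top ?_)
    rw [ENNReal.toReal_ofReal ht.1]
    exact EReal.coe_le_coe_iff.2 ht.2
  · refine (ENNReal.ofReal_le_iff_le_toReal h).1 (le_sInf fun t ht => ?_)
    exact ENNReal.ofReal_le_of_le_toReal
      (hb ⟨ENNReal.toReal_nonneg, EReal.coe_le_coe_iff.1 ht.2⟩)

lemma preLimE_of_ne_top (g : ℝ → ℝ) {u : ℝ≥0∞} (hu : u ≠ ⊤) :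
    preLimE g u = leftLimR g u.toReal := by
  rcases eq_or_ne u 0 with rfl | hu0
  · simp [preLimE, leftLimR]
  · rw [preLimE, if_neg hu0, if_neg hu, leftLimR_of_pos (ENNReal.toReal_pos hu0 hu)]

section Monotone

variable {g : ℝ → ℝ}

def supBefore (g : ℝ → ℝ) (u : ℝ≥0∞) : EReal :=
  (g 0 : EReal) ⊔ ⨆ (w : ℝ≥0) (_ : (w : ℝ≥0∞) < u), (g w : EReal)

lemma le_supBefore {u : ℝ≥0∞} {w : ℝ≥0} (hw : (w : ℝ≥0∞) < u) :
    (g w : EReal) ≤ supBefore g u :=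
  le_sup_of_le_right (le_iSup₂_of_le w hw le_rfl)

lemma le_supBefore_of_ofReal_lt {u : ℝ≥0∞} {v : ℝ} (hv : 0 ≤ v)
    (hvu : ENNReal.ofReal v < u) :
    (g v : EReal) ≤ supBefore g u := by
  simpa only [Real.coe_toNNReal v hv] using le_supBefore (g := g) hvu

lemma monotone_supBefore (g : ℝ → ℝ) : Monotone (supBefore g) :=
  fun _ _ huv => sup_le le_sup_left (iSup₂_le fun _ hw => le_supBefore (hw.trans_le huv))

lemma preLimE_top_eq_supBefore (hmono : MonotoneOn g (Ici 0)) :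
    preLimE g ⊤ = supBefore g ⊤ := by
  rw [preLimE, if_neg ENNReal.top_ne_zero, if_pos rfl]
  have hfreq (w : ℝ≥0) : ∃ᶠ v in atTop, (g w : EReal) ≤ g v :=
    (eventually_ge_atTop (w : ℝ)).frequently.mono fun v hv =>
      EReal.coe_le_coe_iff.2 (hmono w.2 (w.2.trans hv) hv)
  refine le_antisymm (limsup_le_of_le (by isBoundedDefault) ?_)
    (sup_le ?_ (iSup₂_le fun w _ => le_limsup_of_frequently_le' (hfreq w)))
  · filter_upwards [eventually_ge_atTop 0] with v hv
    exact le_supBefore_of_ofReal_lt hv ENNReal.ofReal_lt_top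
  · simpa using le_limsup_of_frequently_le' (hfreq 0)

lemma preLimE_eq_supBefore_of_ne_top (hmono : MonotoneOn g (Ici 0))
    (hll : ∀ t, 0 < t → ∃ l, Tendsto g (𝓝[<] t) (𝓝 l)) {u : ℝ≥0∞} (hu0 : u ≠ 0)
    (hu : u ≠ ⊤) :
    preLimE g u = supBefore g u := by
  have ht : 0 < u.toReal := ENNReal.toReal_pos hu0 hu
  have hlim : Tendsto (fun v => (g v : EReal)) (𝓝[<] u.toReal) (𝓝 (preLimE g u)) := by
    rw [preLimE_of_ne_top g hu]
    exact (continuous_coe_real_ereal.tendsto _).comp (tendsto_leftLimR hll ht)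
  refine le_antisymm (le_of_tendsto hlim ?_) (sup_le ?_ (iSup₂_le fun w hw => ?_))
  · filter_upwards [Ioo_mem_nhdsLT ht] with v hv
    exact le_supBefore_of_ofReal_lt hv.1.le ((ENNReal.ofReal_lt_iff_lt_toReal hv.1.le hu).2 hv.2)
  · refine ge_of_tendsto hlim ?_
    filter_upwards [Ioo_mem_nhdsLT ht] with v hv
    exact EReal.coe_le_coe_iff.2 (hmono self_mem_Ici hv.1.le hv.1.le)
  · have hwu : (w : ℝ) < u.toReal := by
      rwa [← ENNReal.toReal_lt_toReal ENNReal.coe_ne_top hu, ENNReal.coe_toReal] at hw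
    refine ge_of_tendsto hlim ?_
    filter_upwards [Ioo_mem_nhdsLT hwu] with v hv
    exact EReal.coe_le_coe_iff.2 (hmono w.2 (w.2.trans hv.1.le) hv.1.le)

lemma preLimE_eq_supBefore (hmono : MonotoneOn g (Ici 0))
    (hll : ∀ t, 0 < t → ∃ l, Tendsto g (𝓝[<] t) (𝓝 l)) (u : ℝ≥0∞) :
    preLimE g u = supBefore g u := by
  rcases eq_or_ne u 0 with rfl | hu0
  · simp [preLimE, supBefore]
  rcases eq_or_ne u ⊤ with rfl | hu
  · exact preLimE_top_eq_supBefore hmono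
  · exact preLimE_eq_supBefore_of_ne_top hmono hll hu0 hu

lemma monotone_preLimE (hmono : MonotoneOn g (Ici 0))
    (hll : ∀ t, 0 < t → ∃ l, Tendsto g (𝓝[<] t) (𝓝 l)) : Monotone (preLimE g) := by
  simpa only [funext (preLimE_eq_supBefore hmono hll)] using monotone_supBefore g

lemma coe_le_preLimE (hmono : MonotoneOn g (Ici 0))
    (hll : ∀ t, 0 < t → ∃ l, Tendsto g (𝓝[<] t) (𝓝 l)) (u : ℝ≥0∞) :
    (g 0 : EReal) ≤ preLimE g u :=
  (preLimE_eq_supBefore hmono hll u) ▸ le_sup_left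

end Monotone

lemma EReal.eq_coe_neg_of_coe_add_eq_zero {a : ℝ} {b : EReal} (h : (a : EReal) + b = 0) :
    b = (-a : ℝ) := by
  induction b using EReal.rec with
  | bot => simp at h
  | top => simp at h
  | coe b => norm_cast at h ⊢; linarith

section System

variable {d : ℕ} {x : Fin d → Fin d → ℝ → ℝ} {r : Fin d → ℝ}

lemma MemE.cadlagSkipFree (hx : MemE d x) (i : Fin d) : CadlagSkipFree (x i i) :=
  ⟨hx.rightCont i i, hx.leftLimEx i i, hx.skipFree i⟩

variable (x r) in
def offDiagSum (u : Fin d → ℝ≥0∞) (k : Fin d) : EReal :=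
  (r k : EReal) + ∑ j ∈ Finset.univ.erase k, preLimE (x k j) (u j)

variable (x r) in
def passageMap (u : Fin d → ℝ≥0∞) (k : Fin d) : ℝ≥0∞ :=
  firstPassage (x k k) (-offDiagSum x r u k)

lemma monotone_offDiagSum (hx : MemE d x) (k : Fin d) : Monotone (offDiagSum x r · k) :=
  fun _ _ huv => add_le_add_right (Finset.sum_le_sum fun j hj =>
    monotone_preLimE (hx.mono k j (Finset.ne_of_mem_erase hj).symm) (hx.leftLimEx k j) (huv j)) _

lemma offDiagSum_nonneg (hx : MemE d x) (hr : ∀ i, 0 ≤ r i) (u : Fin d → ℝ≥0∞)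
    (k : Fin d) :
    0 ≤ offDiagSum x r u k := by
  refine add_nonneg (EReal.coe_nonneg.2 (hr k)) (Finset.sum_nonneg fun j hj => ?_)
  simpa [hx.zero] using
    coe_le_preLimE (hx.mono k j (Finset.ne_of_mem_erase hj).symm) (hx.leftLimEx k j) (u j)

lemma monotone_passageMap (hx : MemE d x) : Monotone (passageMap x r) :=
  fun _ _ huv k => antitone_firstPassage _ (EReal.neg_le_neg_iff.2 (monotone_offDiagSum hx k huv))

lemma isSolution_iff {u : Fin d → ℝ≥0∞} :
    IsSolution d x r u ↔
      ∀ k, u k ≠ ⊤ → (leftLimR (x k k) (u k).toReal : EReal) + offDiagSum x r u k = 0 := by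
  refine forall₂_congr fun k hk => ?_
  rw [offDiagSum, ← Finset.add_sum_erase _ _ (Finset.mem_univ k), preLimE_of_ne_top _ hk,
    add_left_comm]

lemma passageMap_le_of_isSolution {u : Fin d → ℝ≥0∞} (hu : IsSolution d x r u) :
    passageMap x r u ≤ u := by
  intro k
  rcases eq_or_ne (u k) ⊤ with hk | hk
  · exact hk ▸ le_top
  · refine firstPassage_le hk ?_
    rw [EReal.eq_coe_neg_of_coe_add_eq_zero (isSolution_iff.1 hu k hk), ← EReal.coe_neg, neg_neg]

lemma exists_isGLB_of_passageMap_apply_eq (hx : MemE d x) (hr : ∀ i, 0 ≤ r i)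
    {p : Fin d → ℝ≥0∞} {k : Fin d} (hp : passageMap x r p k = p k) (hk : p k ≠ ⊤) :
    ∃ a : ℝ, 0 ≤ a ∧ offDiagSum x r p k = a ∧
      IsGLB {t | 0 ≤ t ∧ leftLimR (x k k) t ≤ -a} (p k).toReal := by
  have hnonneg := offDiagSum_nonneg hx hr p k
  have htop : offDiagSum x r p k ≠ ⊤ := fun htop => hk <| by
    rw [← hp, passageMap, htop, EReal.neg_top, firstPassage_bot]
  obtain ⟨a, ha⟩ : ∃ a : ℝ, offDiagSum x r p k = a :=
    ⟨_, (EReal.coe_toReal htop (hnonneg.trans_lt' EReal.bot_lt_zero).ne_bot).symm⟩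
  have hpk : firstPassage (x k k) (-a : ℝ) = p k := by rw [← hp, passageMap, ha, EReal.coe_neg]
  refine ⟨a, EReal.coe_nonneg.1 (ha ▸ hnonneg), ha, ?_⟩
  exact hpk ▸ isGLB_firstPassage (hpk ▸ hk)

lemma isSolution_of_passageMap_eq (hx : MemE d x) (hr : ∀ i, 0 ≤ r i) {p : Fin d → ℝ≥0∞}
    (hp : passageMap x r p = p) : IsSolution d x r p := by
  refine isSolution_iff.2 fun k hk => ?_
  obtain ⟨a, ha0, ha, hGLB⟩ := exists_isGLB_of_passageMap_apply_eq hx hr (congrFun hp k) hk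
  have hpass := (hx.cadlagSkipFree k).leftLimR_eq_of_isGLB (by rw [hx.zero]; linarith) hGLB
  rw [hpass, ha, ← EReal.coe_add, neg_add_cancel, EReal.coe_zero]

lemma IsSmallestSolution.passageMap_eq (hx : MemE d x) (hr : ∀ i, 0 ≤ r i)
    {s : Fin d → ℝ≥0∞} (hs : IsSmallestSolution d x r s) : passageMap x r s = s := by
  let F : (Fin d → ℝ≥0∞) →o (Fin d → ℝ≥0∞) :=
    ⟨passageMap x r, monotone_passageMap hx⟩
  have hlfp_le : F.lfp ≤ s := F.lfp_le (passageMap_le_of_isSolution hs.1)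
  have hle_lfp : s ≤ F.lfp := hs.2 _ (isSolution_of_passageMap_eq hx hr F.map_lfp)
  rw [← le_antisymm hlfp_le hle_lfp]
  exact F.map_lfp

end System

theorem smallest_solution_coordinate_at_infimum_general (d : ℕ)
    (x : Fin d → Fin d → ℝ → ℝ) (hx : MemE d x)
    (r : Fin d → ℝ) (hr : ∀ i, 0 ≤ r i)
    (s : Fin d → ℝ≥0∞) (hs : IsSmallestSolution d x r s) :
    ∀ i, s i ≠ ⊤ →
      (s i).toReal =
        sInf {t : ℝ | 0 ≤ t ∧
          leftLimR (x i i) t = sInf (x i i '' Set.Icc 0 (s i).toReal)} := by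
  intro i hi
  obtain ⟨a, ha0, -, hGLB⟩ :=
    exists_isGLB_of_passageMap_apply_eq hx hr (congrFun (hs.passageMap_eq hx hr) i) hi
  exact (hx.cadlagSkipFree i).eq_sInf_leftLimR_eq_sInf_image (by rw [hx.zero]; linarith) hGLB

/-- each finite coordinate of the smallest solution `s` of `(r, x)` satisfies
`s_i = inf { t ≥ 0 : x^{i,i}(t−) = inf_{0 ≤ u ≤ s_i} x^{i,i}(u) }`. -/
theorem smallest_solution_coordinate_at_infimum (d : ℕ) (hd : 1 ≤ d)
    (x : Fin d → Fin d → ℝ → ℝ) (hx : MemE d x)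
    (r : Fin d → ℝ) (hr : ∀ i, 0 ≤ r i)
    (s : Fin d → ℝ≥0∞) (hs : IsSmallestSolution d x r s) :
    ∀ i, s i ≠ ⊤ →
      (s i).toReal =
        sInf {t : ℝ | 0 ≤ t ∧
          leftLimR (x i i) t = sInf (x i i '' Set.Icc 0 (s i).toReal)} :=
  smallest_solution_coordinate_at_infimum_general d x hx r hr s hs

end
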